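/- Let R = ℂ[x,y,z]/(xy), let s ∈ ℂ, and let π₀ : R → ℂ[x,z] and π₁ : R → ℂ[y,z] be the ring homomorphisms determined by x↦x, y↦0, z↦z and x↦0, y↦y, z↦z+s respectively. Then the kernel of the induced map on Kähler differentials Ω_{R/ℂ} → Ω_{ℂ[x,z]/ℂ} × Ω_{ℂ[y,z]/ℂ} is exactly the R-submodule of Ω_{R/ℂ} generated by the element x·dy (equivalently, by y·dx, since x·dy = −y·dx in Ω_{R/ℂ}). Moreover this kernel is annihilated by the ideal (x,y) of R and is a free module of rank one over R/(x,y) ≅ ℂ[z]. -/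

import Mathlib

noncomputable section TorsionForms

open MvPolynomial KaehlerDifferential

/-- `R = ℂ[x,y,z]/(xy)`. -/
abbrev Rq : Type :=
  MvPolynomial (Fin 3) ℂ ⧸ Ideal.span {(X 0 * X 1 : MvPolynomial (Fin 3) ℂ)}

/-- The class of `x` in `R`. -/
def xq : Rq := Ideal.Quotient.mk _ (X 0)
/-- The class of `y` in `R`. -/
def yq : Rq := Ideal.Quotient.mk _ (X 1)

/-- `π₀ : R → ℂ[x,z]`, `x↦x, y↦0, z↦z` (variables `0 = x`, `1 = z`). -/
def pr₀ : Rq →ₐ[ℂ] MvPolynomial (Fin 2) ℂ :=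
  Ideal.Quotient.liftₐ _ (aeval ![X 0, 0, X 1]) (by
    intro a ha
    obtain ⟨c, rfl⟩ := Ideal.mem_span_singleton.mp ha
    simp)

/-- `π₁ : R → ℂ[y,z]`, `x↦0, y↦y, z↦z+s` (variables `0 = y`, `1 = z`). -/
def pr₁ (s : ℂ) : Rq →ₐ[ℂ] MvPolynomial (Fin 2) ℂ :=
  Ideal.Quotient.liftₐ _ (aeval ![0, X 0, X 1 + C s]) (by
    intro a ha
    obtain ⟨c, rfl⟩ := Ideal.mem_span_singleton.mp ha
    simp)

namespace TF

abbrev P3 := MvPolynomial (Fin 3) ℂ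
abbrev fgen : P3 := X 0 * X 1
abbrev Iq : Ideal P3 := Ideal.span {fgen}
def zq : Rq := Ideal.Quotient.mk _ (X 2)

lemma sub_aeval_mem (J : Ideal P3) (g : Fin 3 → P3) (hg : ∀ i, X i - g i ∈ J) (f : P3) :
    f - aeval g f ∈ J := by
  induction f using MvPolynomial.induction_on with
  | C a => simp
  | add p q hp hq =>
      rw [map_add]
      have := J.add_mem hp hq
      convert this using 1; ring
  | mul_X p i hp =>
      rw [map_mul, aeval_X]
      have := J.add_mem (J.mul_mem_left p (hg i)) (J.mul_mem_right (g i) hp)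
      convert this using 1; ring

def pA : P3 →ₐ[ℂ] MvPolynomial (Fin 2) ℂ := aeval ![X 0, 0, X 1]
def pB (s : ℂ) : P3 →ₐ[ℂ] MvPolynomial (Fin 2) ℂ := aeval ![0, X 0, X 1 + C s]
def pC : P3 →ₐ[ℂ] Polynomial ℂ := aeval ![0, 0, Polynomial.X]

def eA : MvPolynomial (Fin 2) ℂ →ₐ[ℂ] P3 := aeval ![X 0, X 2]
def eB (s : ℂ) : MvPolynomial (Fin 2) ℂ →ₐ[ℂ] P3 := aeval ![X 1, X 2 - C s]
def eC : Polynomial ℂ →ₐ[ℂ] P3 := Polynomial.aeval (X 2)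

lemma eA_pA (f : MvPolynomial (Fin 2) ℂ) : pA (eA f) = f := by
  have : pA.comp eA = AlgHom.id ℂ _ := by
    apply MvPolynomial.algHom_ext; intro i
    fin_cases i <;> simp [pA, eA]
  exact congrArg (· f) this

lemma eB_pB (s : ℂ) (f : MvPolynomial (Fin 2) ℂ) : pB s (eB s f) = f := by
  have : (pB s).comp (eB s) = AlgHom.id ℂ _ := by
    apply MvPolynomial.algHom_ext; intro i
    fin_cases i <;> simp [pB, eB]
  exact congrArg (· f) this

lemma eC_pC (f : Polynomial ℂ) : pC (eC f) = f := by
  have : pC.comp eC = AlgHom.id ℂ _ := by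
    apply Polynomial.algHom_ext; simp [pC, eC]
  exact congrArg (· f) this

lemma ker_pA {f : P3} (h : pA f = 0) : f ∈ Ideal.span {(X 1 : P3)} := by
  have hcomp : eA.comp pA = aeval ![X 0, (0:P3), X 2] := by
    apply MvPolynomial.algHom_ext; intro i
    fin_cases i <;> simp [pA, eA]
  have h1 : f - aeval ![X 0, (0:P3), X 2] f ∈ Ideal.span {(X 1 : P3)} := by
    apply sub_aeval_mem; intro i
    fin_cases i <;> simp [Ideal.mem_span_singleton]
  have h2 : aeval ![X 0, (0:P3), X 2] f = 0 := by
    rw [← hcomp]; simp [h]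
  rwa [h2, sub_zero] at h1

lemma ker_pB {s : ℂ} {f : P3} (h : pB s f = 0) : f ∈ Ideal.span {(X 0 : P3)} := by
  have hcomp : (eB s).comp (pB s) = aeval ![(0:P3), X 1, X 2] := by
    apply MvPolynomial.algHom_ext; intro i
    fin_cases i <;> simp [pB, eB]
  have h1 : f - aeval ![(0:P3), X 1, X 2] f ∈ Ideal.span {(X 0 : P3)} := by
    apply sub_aeval_mem; intro i
    fin_cases i <;> simp [Ideal.mem_span_singleton]
  have h2 : aeval ![(0:P3), X 1, X 2] f = 0 := by
    rw [← hcomp]; simp [h]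
  rwa [h2, sub_zero] at h1

lemma ker_pC {f : P3} (h : pC f = 0) : f ∈ Ideal.span {(X 0 : P3), X 1} := by
  have hcomp : eC.comp pC = aeval ![(0:P3), 0, X 2] := by
    apply MvPolynomial.algHom_ext; intro i
    fin_cases i <;> simp [pC, eC]
  have h1 : f - aeval ![(0:P3), 0, X 2] f ∈ Ideal.span {(X 0 : P3), X 1} := by
    apply sub_aeval_mem; intro i
    fin_cases i <;> simp [Ideal.mem_span_pair]
    · exact ⟨1, 0, by ring⟩
    · exact ⟨0, 1, by ring⟩
  have h2 : aeval ![(0:P3), 0, X 2] f = 0 := by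
    rw [← hcomp]; simp [h]
  rwa [h2, sub_zero] at h1

end TF

namespace TF

abbrev mkq : P3 →+* Rq := Ideal.Quotient.mk Iq

lemma mk_eq_zero_iff {f : P3} : mkq f = 0 ↔ fgen ∣ f :=
  (Ideal.Quotient.eq_zero_iff_mem).trans Ideal.mem_span_singleton

lemma xq_mul_yq : xq * yq = 0 := by
  show mkq (X 0) * mkq (X 1) = 0
  rw [← map_mul, mk_eq_zero_iff]

lemma pr0_mk (f : P3) : pr₀ (mkq f) = pA f := rfl
lemma pr1_mk (s : ℂ) (f : P3) : pr₁ s (mkq f) = pB s f := rfl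

lemma pr0_xq : pr₀ xq = X 0 := by rw [show xq = mkq (X 0) from rfl, pr0_mk]; simp [pA]
lemma pr0_yq : pr₀ yq = 0 := by rw [show yq = mkq (X 1) from rfl, pr0_mk]; simp [pA]
lemma pr0_zq : pr₀ zq = X 1 := by rw [show zq = mkq (X 2) from rfl, pr0_mk]; simp [pA]
lemma pr1_xq (s : ℂ) : pr₁ s xq = 0 := by rw [show xq = mkq (X 0) from rfl, pr1_mk]; simp [pB]
lemma pr1_yq (s : ℂ) : pr₁ s yq = X 0 := by rw [show yq = mkq (X 1) from rfl, pr1_mk]; simp [pB]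
lemma pr1_zq (s : ℂ) : pr₁ s zq = X 1 + C s := by
  rw [show zq = mkq (X 2) from rfl, pr1_mk]; simp [pB]

/-- annihilator fact: `yq * t = 0 → xq ∣ t`. -/
lemma ann_yq {t : Rq} (h : yq * t = 0) : ∃ u : Rq, t = xq * u := by
  obtain ⟨τ, rfl⟩ := Ideal.Quotient.mk_surjective t
  have h2 : fgen ∣ X 1 * τ := by
    rw [← mk_eq_zero_iff, map_mul]; exact h
  have h2' : X 0 * X 1 ∣ τ * X 1 := by rw [mul_comm τ (X 1)]; exact h2
  have h3 : X 0 ∣ τ := (mul_dvd_mul_iff_right (X_ne_zero (R := ℂ) (1 : Fin 3))).mp h2'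
  obtain ⟨u, rfl⟩ := h3
  exact ⟨mkq u, by rw [map_mul]; rfl⟩

lemma ann_xq {t : Rq} (h : xq * t = 0) : ∃ u : Rq, t = yq * u := by
  obtain ⟨τ, rfl⟩ := Ideal.Quotient.mk_surjective t
  have h2 : fgen ∣ X 0 * τ := by
    rw [← mk_eq_zero_iff, map_mul]; exact h
  have h2' : X 1 * X 0 ∣ τ * X 0 := by rw [mul_comm τ (X 0), mul_comm (X 1) (X 0)]; exact h2
  have h3 : X 1 ∣ τ := (mul_dvd_mul_iff_right (X_ne_zero (R := ℂ) (0 : Fin 3))).mp h2'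
  obtain ⟨u, rfl⟩ := h3
  exact ⟨mkq u, by rw [map_mul]; rfl⟩

/-- kernel facts on `Rq`. -/
lemma ker_pr0 {a : Rq} (h : pr₀ a = 0) : ∃ a₁ : Rq, a = yq * a₁ := by
  obtain ⟨α, rfl⟩ := Ideal.Quotient.mk_surjective a
  rw [pr0_mk] at h
  obtain ⟨u, rfl⟩ := Ideal.mem_span_singleton.mp (ker_pA h)
  exact ⟨mkq u, (map_mul mkq _ _)⟩

lemma ker_pr1 {s : ℂ} {b : Rq} (h : pr₁ s b = 0) : ∃ b₁ : Rq, b = xq * b₁ := by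
  obtain ⟨β, rfl⟩ := Ideal.Quotient.mk_surjective b
  rw [pr1_mk] at h
  obtain ⟨u, rfl⟩ := Ideal.mem_span_singleton.mp (ker_pB h)
  exact ⟨mkq u, (map_mul mkq _ _)⟩

lemma ker_pr01 {s : ℂ} {c : Rq} (h0 : pr₀ c = 0) (h1 : pr₁ s c = 0) : c = 0 := by
  obtain ⟨γ, rfl⟩ := Ideal.Quotient.mk_surjective c
  rw [pr0_mk] at h0; rw [pr1_mk] at h1
  obtain ⟨u, rfl⟩ := Ideal.mem_span_singleton.mp (ker_pA h0)
  rw [map_mul] at h1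
  have hX1 : pB s (X 1) = X 0 := by simp [pB]
  rw [hX1] at h1
  have h2 : pB s u = 0 := by
    rcases mul_eq_zero.mp h1 with h | h
    · exact absurd h (X_ne_zero 0)
    · exact h
  obtain ⟨v, rfl⟩ := Ideal.mem_span_singleton.mp (ker_pB h2)
  rw [mk_eq_zero_iff]
  exact ⟨v, by ring⟩

end TF

namespace TF

set_option synthInstance.maxHeartbeats 400000
set_option maxHeartbeats 1600000

lemma aeval_val_eq : (aeval ![xq, yq, zq] : P3 →ₐ[ℂ] Rq) = Ideal.Quotient.mkₐ ℂ Iq := by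
  apply MvPolynomial.algHom_ext; intro i
  fin_cases i <;> simp [xq, yq, zq]

lemma surj_val (r : Rq) : ∃ f : P3, aeval ![xq, yq, zq] f = r := by
  obtain ⟨f, rfl⟩ := Ideal.Quotient.mk_surjective r
  exact ⟨f, by rw [aeval_val_eq]; rfl⟩

abbrev Pg : Algebra.Generators ℂ Rq (Fin 3) where
  val := ![xq, yq, zq]
  σ' := fun r => (surj_val r).choose
  aeval_val_σ' := fun r => (surj_val r).choose_spec

lemma aeval_val_mk (g : P3) : aeval Pg.val g = mkq g := by
  rw [show Pg.val = ![xq, yq, zq] from rfl, aeval_val_eq]; rfl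

lemma Ext_algebraMap (f : P3) : algebraMap Pg.toExtension.Ring Rq f = mkq f := by
  show aeval Pg.val f = mkq f
  exact aeval_val_mk f

lemma Pg_ker : Pg.toExtension.ker = Iq := by
  have h1 : Pg.toExtension.ker = RingHom.ker (algebraMap Pg.toExtension.Ring Rq) := rfl
  have h : (algebraMap Pg.toExtension.Ring Rq : P3 →+* Rq) = (mkq : P3 →+* Rq) :=
    RingHom.ext Ext_algebraMap
  rw [h1, h]; exact Ideal.ext fun _ => RingHom.mem_ker.trans (mk_eq_zero_iff.trans Ideal.mem_span_singleton.symm)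

lemma toKaehler_bs (i : Fin 3) :
    Pg.toExtension.toKaehler (Pg.cotangentSpaceBasis i) = D ℂ Rq (![xq, yq, zq] i) := by
  rw [Algebra.Generators.cotangentSpaceBasis_apply]
  erw [KaehlerDifferential.mapBaseChange_tmul]
  rw [one_smul]
  erw [KaehlerDifferential.map_D]
  rw [Ext_algebraMap]
  fin_cases i <;> rfl

lemma exists_coords (ω : Ω[Rq⁄ℂ]) : ∃ a b c : Rq,
    ω = a • D ℂ Rq xq + b • D ℂ Rq yq + c • D ℂ Rq zq := by
  obtain ⟨ξ, rfl⟩ := Pg.toExtension.toKaehler_surjective ω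
  refine ⟨Pg.cotangentSpaceBasis.repr ξ 0, Pg.cotangentSpaceBasis.repr ξ 1,
    Pg.cotangentSpaceBasis.repr ξ 2, ?_⟩
  conv_lhs => rw [← Module.Basis.sum_repr Pg.cotangentSpaceBasis ξ]
  rw [Fin.sum_univ_three, map_add, map_add, map_smul, map_smul, map_smul,
    toKaehler_bs, toKaehler_bs, toKaehler_bs]
  simp

lemma coords_rel {a b c : Rq}
    (h : a • D ℂ Rq xq + b • D ℂ Rq yq + c • D ℂ Rq zq = 0) :
    ∃ t : Rq, a = t * yq ∧ b = t * xq ∧ c = 0 := by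
  set ξ := a • Pg.cotangentSpaceBasis 0 + b • Pg.cotangentSpaceBasis 1
      + c • Pg.cotangentSpaceBasis 2 with hξ
  have hk : Pg.toExtension.toKaehler ξ = 0 := by
    rw [hξ, map_add, map_add, map_smul, map_smul, map_smul,
      toKaehler_bs, toKaehler_bs, toKaehler_bs]
    simpa using h
  obtain ⟨χ, hχ⟩ := (Pg.toExtension.exact_cotangentComplex_toKaehler ξ).mp hk
  obtain ⟨w, rfl⟩ := Algebra.Extension.Cotangent.mk_surjective χ
  rw [Algebra.Extension.cotangentComplex_mk] at hχ
  have hw : w.1 ∈ Iq := Pg_ker.le w.2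
  obtain ⟨u, hu⟩ := Ideal.mem_span_singleton.mp hw
  have h0 := congrArg (fun v => Pg.cotangentSpaceBasis.repr v 0) hχ
  have h1 := congrArg (fun v => Pg.cotangentSpaceBasis.repr v 1) hχ
  have h2 := congrArg (fun v => Pg.cotangentSpaceBasis.repr v 2) hχ
  simp only [hξ, map_add, map_smul, Module.Basis.repr_self,
    Algebra.Generators.cotangentSpaceBasis_repr_one_tmul, Finsupp.coe_add, Finsupp.coe_smul,
    Pi.add_apply, Pi.smul_apply, Finsupp.single_apply, smul_eq_mul, Fin.isValue] at h0 h1 h2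
  norm_num at h0 h1 h2
  simp only [Finsupp.single_apply, Fin.reduceEq, if_true, if_false, mul_zero, mul_one, add_zero, zero_add] at h0 h1 h2
  rw [aeval_val_mk] at h0 h1 h2
  have hu' : ∃ u' : P3, w.1 = fgen * u' := ⟨u, hu⟩
  obtain ⟨u', hu'⟩ := hu'
  rw [hu'] at h0 h1 h2
  have hfgen : mkq fgen = 0 := mk_eq_zero_iff.mpr dvd_rfl
  have hmul : ∀ i : Fin 3, mkq ((pderiv i) (fgen * u')) = mkq ((pderiv i) fgen) * mkq u' := by
    intro i
    have k : (pderiv i) (fgen * u') = (pderiv i) fgen * u' + fgen * (pderiv i) u' := pderiv_mul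
    rw [k, map_add, map_mul mkq ((pderiv i) fgen) u', map_mul mkq fgen ((pderiv i) u'),
      hfgen, zero_mul, add_zero]
  have p0 : (pderiv (0 : Fin 3)) fgen = X 1 := by
    have k : (pderiv (0:Fin 3)) ((X 0 : P3) * X 1) = (pderiv (0:Fin 3)) (X 0) * X 1
        + X 0 * (pderiv (0:Fin 3)) (X 1) := pderiv_mul
    rw [k, pderiv_X_self, pderiv_X_of_ne (by decide), one_mul, mul_zero, add_zero]
  have p1 : (pderiv (1 : Fin 3)) fgen = X 0 := by
    have k : (pderiv (1:Fin 3)) ((X 0 : P3) * X 1) = (pderiv (1:Fin 3)) (X 0) * X 1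
        + X 0 * (pderiv (1:Fin 3)) (X 1) := pderiv_mul
    rw [k, pderiv_X_self, pderiv_X_of_ne (by decide), zero_mul, mul_one, zero_add]
  have p2 : (pderiv (2 : Fin 3)) fgen = 0 := by
    have k : (pderiv (2:Fin 3)) ((X 0 : P3) * X 1) = (pderiv (2:Fin 3)) (X 0) * X 1
        + X 0 * (pderiv (2:Fin 3)) (X 1) := pderiv_mul
    rw [k, pderiv_X_of_ne (by decide), pderiv_X_of_ne (by decide), zero_mul, mul_zero, add_zero]
  refine ⟨mkq u', ?_, ?_, ?_⟩
  · rw [← h0, hmul 0, p0, mul_comm]; rfl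
  · rw [← h1, hmul 1, p1, mul_comm]; rfl
  · rw [← h2, hmul 2, p2, map_zero, zero_mul]

end TF

namespace TF

lemma Dxy_rel : xq • D ℂ Rq yq = -(yq • D ℂ Rq xq) := by
  have h := (D ℂ Rq).leibniz xq yq
  rw [xq_mul_yq, map_zero] at h
  exact eq_neg_of_add_eq_zero_left h.symm

lemma free2 {p q : MvPolynomial (Fin 2) ℂ}
    (h : p • D ℂ (MvPolynomial (Fin 2) ℂ) (X 0) + q • D ℂ (MvPolynomial (Fin 2) ℂ) (X 1) = 0) :
    p = 0 ∧ q = 0 := by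
  have h0 := congrArg (fun v => (mvPolynomialBasis ℂ (Fin 2)).repr v 0) h
  have h1 := congrArg (fun v => (mvPolynomialBasis ℂ (Fin 2)).repr v 1) h
  simp only [map_add, map_smul, mvPolynomialBasis_repr_D_X, map_zero, Finsupp.coe_add,
    Finsupp.coe_smul, Pi.add_apply, Pi.smul_apply, Finsupp.single_apply, smul_eq_mul,
    Finsupp.coe_zero, Pi.zero_apply, Fin.reduceEq, if_true, if_false, reduceIte,
    mul_one, mul_zero, add_zero, zero_add] at h0 h1
  exact ⟨h0, h1⟩

/-- The quotient ring equivalence for part 6. -/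
lemma quot_equiv : Nonempty ((Rq ⧸ Ideal.span {xq, yq}) ≃+* Polynomial ℂ) := by
  set J3 : Ideal P3 := Ideal.span {(X 0 : P3), X 1} with hJ3
  have hsurj : Function.Surjective (pC : P3 →+* Polynomial ℂ) := fun p => ⟨eC p, eC_pC p⟩
  have hker : RingHom.ker (pC : P3 →+* Polynomial ℂ) = J3 := by
    apply le_antisymm
    · intro f hf
      exact ker_pC (by simpa [RingHom.mem_ker] using hf)
    · rw [hJ3, Ideal.span_le]
      rintro g hg
      rcases hg with rfl | hg
      · simp [RingHom.mem_ker, pC]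
      · rcases hg with rfl
        simp [RingHom.mem_ker, pC]
  have hmap : Ideal.span {xq, yq} = J3.map (Ideal.Quotient.mk Iq) := by
    rw [hJ3, Ideal.map_span, Set.image_insert_eq, Set.image_singleton]
    rfl
  have hIle : Iq ≤ J3 := by
    rw [Ideal.span_le]
    rintro g rfl
    exact Ideal.mul_mem_right _ _ (Ideal.subset_span (by simp))
  refine ⟨?_⟩
  exact ((Ideal.quotEquivOfEq hmap).trans
    ((DoubleQuot.quotQuotEquivQuotSup Iq J3).trans
      ((Ideal.quotEquivOfEq (sup_eq_right.mpr hIle)).trans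
        ((Ideal.quotEquivOfEq hker.symm).trans
          (RingHom.quotientKerEquivOfSurjective hsurj)))))

end TF

set_option maxHeartbeats 1600000
set_option synthInstance.maxHeartbeats 400000

open TF in
/-- Let `R = ℂ[x,y,z]/(xy)`, `s ∈ ℂ`, and let `π₀ : R → ℂ[x,z]` and `π₁ : R → ℂ[y,z]` be
given by `x↦x, y↦0, z↦z` and `x↦0, y↦y, z↦z+s`.  Let `Φ` be the induced map on Kähler
differentials `Ω_{R/ℂ} → Ω_{ℂ[x,z]/ℂ} × Ω_{ℂ[y,z]/ℂ}` (characterized by `Φ(dr) =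
(d(π₀ r), d(π₁ r))` and semilinearity `Φ(r·ω) = (π₀(r)·-, π₁(r)·-)Φ(ω)`).  Then the kernel
of `Φ` is exactly the `R`-submodule of `Ω_{R/ℂ}` generated by `x·dy` (equivalently by
`y·dx`, since `x·dy = −y·dx`); it is annihilated by the ideal `(x,y)` of `R`, and it is
free of rank one over `R/(x,y) ≅ ℂ[z]`. -/
theorem torsion_one_forms (s : ℂ)
    (Φ : Ω[Rq⁄ℂ] →ₗ[ℂ] Ω[MvPolynomial (Fin 2) ℂ⁄ℂ] × Ω[MvPolynomial (Fin 2) ℂ⁄ℂ])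
    (hD : ∀ r : Rq, Φ (D ℂ Rq r) =
      (D ℂ (MvPolynomial (Fin 2) ℂ) (pr₀ r), D ℂ (MvPolynomial (Fin 2) ℂ) (pr₁ s r)))
    (hsmul : ∀ (r : Rq) (ω : Ω[Rq⁄ℂ]),
      Φ (r • ω) = (pr₀ r • (Φ ω).1, pr₁ s r • (Φ ω).2)) :
    ((LinearMap.ker Φ : Set (Ω[Rq⁄ℂ])) =
        (Submodule.span Rq {xq • D ℂ Rq yq} : Set (Ω[Rq⁄ℂ]))) ∧
    xq • D ℂ Rq yq = -(yq • D ℂ Rq xq) ∧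
    ((LinearMap.ker Φ : Set (Ω[Rq⁄ℂ])) =
        (Submodule.span Rq {yq • D ℂ Rq xq} : Set (Ω[Rq⁄ℂ]))) ∧
    (∀ r ∈ Ideal.span {xq, yq}, ∀ ω ∈ LinearMap.ker Φ, r • ω = 0) ∧
    (∃ e : Ω[Rq⁄ℂ],
      (LinearMap.ker Φ : Set (Ω[Rq⁄ℂ])) = {ω | ∃ r : Rq, ω = r • e} ∧
      ∀ r : Rq, r • e = 0 ↔ r ∈ Ideal.span {xq, yq}) ∧
    Nonempty ((Rq ⧸ Ideal.span {xq, yq}) ≃+* Polynomial ℂ) := by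
  classical
  have hrel : xq • D ℂ Rq yq = -(yq • D ℂ Rq xq) := Dxy_rel
  -- values of Φ on scaled basic differentials
  have hφx : ∀ a : Rq, Φ (a • D ℂ Rq xq) =
      (pr₀ a • D ℂ (MvPolynomial (Fin 2) ℂ) (X 0), 0) := by
    intro a
    rw [hsmul, hD]
    simp [pr0_xq, pr1_xq]
  have hφy : ∀ b : Rq, Φ (b • D ℂ Rq yq) =
      (0, pr₁ s b • D ℂ (MvPolynomial (Fin 2) ℂ) (X 0)) := by
    intro b
    rw [hsmul, hD]
    simp [pr0_yq, pr1_yq]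
  have hφz : ∀ c : Rq, Φ (c • D ℂ Rq zq) =
      (pr₀ c • D ℂ (MvPolynomial (Fin 2) ℂ) (X 1),
        pr₁ s c • D ℂ (MvPolynomial (Fin 2) ℂ) (X 1)) := by
    intro c
    rw [hsmul, hD, pr0_zq, pr1_zq]
    rw [show (D ℂ (MvPolynomial (Fin 2) ℂ)) (X 1 + C s)
        = D ℂ (MvPolynomial (Fin 2) ℂ) (X 1) from by
      rw [map_add, show (C s : MvPolynomial (Fin 2) ℂ) = algebraMap ℂ _ s from rfl,
        Derivation.map_algebraMap, add_zero]]
  have hgen0 : Φ (xq • D ℂ Rq yq) = 0 := by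
    rw [hφy xq, pr1_xq]
    simp
  have hmemker : ∀ r : Rq, Φ (r • (xq • D ℂ Rq yq)) = 0 := by
    intro r
    rw [hsmul, hgen0]
    simp
  have hker_sub : ∀ ω : Ω[Rq⁄ℂ], Φ ω = 0 → ∃ r : Rq, ω = r • (xq • D ℂ Rq yq) := by
    intro ω hω
    obtain ⟨a, b, c, rfl⟩ := exists_coords ω
    rw [map_add, map_add, hφx a, hφy b, hφz c] at hω
    have hfst := congrArg Prod.fst hω
    have hsnd := congrArg Prod.snd hω
    simp only [Prod.fst_add, Prod.snd_add, zero_add, add_zero, Prod.fst_zero,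
      Prod.snd_zero] at hfst hsnd
    obtain ⟨ha0, hc0⟩ := free2 hfst
    obtain ⟨hb0, hc1⟩ := free2 hsnd
    obtain ⟨a₁, ha⟩ := ker_pr0 ha0
    obtain ⟨b₁, hb⟩ := ker_pr1 hb0
    have hc : c = 0 := ker_pr01 hc0 hc1
    refine ⟨b₁ - a₁, ?_⟩
    rw [ha, hb, hc, zero_smul Rq (D ℂ Rq zq), add_zero, mul_comm yq a₁, mul_comm xq b₁,
      mul_smul a₁ yq (D ℂ Rq xq), mul_smul b₁ xq (D ℂ Rq yq)]
    have hyd : yq • D ℂ Rq xq = -(xq • D ℂ Rq yq) := by rw [hrel, neg_neg]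
    rw [hyd, smul_neg a₁ (xq • D ℂ Rq yq), sub_smul b₁ a₁ (xq • D ℂ Rq yq)]
    abel
  have hset1 : (LinearMap.ker Φ : Set (Ω[Rq⁄ℂ])) =
      (Submodule.span Rq {xq • D ℂ Rq yq} : Set (Ω[Rq⁄ℂ])) := by
    ext ω
    simp only [SetLike.mem_coe, LinearMap.mem_ker, Submodule.mem_span_singleton]
    constructor
    · intro h'
      obtain ⟨r, hr⟩ := hker_sub ω h'
      exact ⟨r, hr.symm⟩
    · rintro ⟨r, rfl⟩
      exact hmemker r
  have hset3 : (LinearMap.ker Φ : Set (Ω[Rq⁄ℂ])) =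
      (Submodule.span Rq {yq • D ℂ Rq xq} : Set (Ω[Rq⁄ℂ])) := by
    rw [hset1]
    have hyd : yq • D ℂ Rq xq = -(xq • D ℂ Rq yq) := by rw [hrel, neg_neg]
    rw [hyd]
    ext ω
    simp only [SetLike.mem_coe, Submodule.mem_span_singleton]
    constructor
    · rintro ⟨r, rfl⟩
      exact ⟨-r, by rw [smul_neg, neg_smul, neg_neg]⟩
    · rintro ⟨r, rfl⟩
      exact ⟨-r, by rw [neg_smul, smul_neg]⟩
  have hxgen : xq • (xq • D ℂ Rq yq) = 0 := by
    rw [hrel, smul_neg xq (yq • D ℂ Rq xq), smul_smul xq yq (D ℂ Rq xq), xq_mul_yq]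
    rw [zero_smul Rq ((D ℂ Rq) xq), neg_zero]
  have hygen : yq • (xq • D ℂ Rq yq) = 0 := by
    rw [smul_smul yq xq (D ℂ Rq yq), mul_comm yq xq, xq_mul_yq]
    rw [zero_smul Rq ((D ℂ Rq) yq)]
  have hann : ∀ r ∈ Ideal.span {xq, yq}, r • (xq • D ℂ Rq yq) = 0 := by
    intro r hr
    obtain ⟨p, q, hpq⟩ := Ideal.mem_span_pair.mp hr
    rw [← hpq, add_smul (p * xq) (q * yq) (xq • D ℂ Rq yq), mul_smul p xq (xq • D ℂ Rq yq),
      mul_smul q yq (xq • D ℂ Rq yq), hxgen, hygen, smul_zero p, smul_zero q, add_zero]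
  have hann' : ∀ r : Rq, r • (xq • D ℂ Rq yq) = 0 → r ∈ Ideal.span {xq, yq} := by
    intro r hr
    have h' : (0 : Rq) • D ℂ Rq xq + (r * xq) • D ℂ Rq yq + (0 : Rq) • D ℂ Rq zq = 0 := by
      rw [zero_smul Rq (D ℂ Rq xq), zero_smul Rq (D ℂ Rq zq), zero_add, add_zero,
        ← smul_smul r xq (D ℂ Rq yq)]
      exact hr
    obtain ⟨t, ht1, ht2, -⟩ := coords_rel h'
    have hyt : yq * t = 0 := by rw [mul_comm]; exact ht1.symm
    obtain ⟨u, hu⟩ := ann_yq hyt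
    have h2 : xq * (r - xq * u) = 0 := by
      rw [hu] at ht2
      linear_combination ht2
    obtain ⟨k, hk⟩ := ann_xq h2
    rw [Ideal.mem_span_pair]
    exact ⟨u, k, by linear_combination -hk⟩
  refine ⟨hset1, hrel, hset3, ?_, ⟨xq • D ℂ Rq yq, ?_, ?_⟩, quot_equiv⟩
  · intro r hr ω hω
    obtain ⟨t, ht⟩ := hker_sub ω (LinearMap.mem_ker.mp hω)
    rw [ht, smul_smul r t (xq • D ℂ Rq yq)]
    exact hann (r * t) (Ideal.mul_mem_right t _ hr)
  · rw [hset1]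
    ext ω
    simp only [SetLike.mem_coe, Submodule.mem_span_singleton, Set.mem_setOf_eq, eq_comm]
  · intro r
    exact ⟨hann' r, hann r⟩

end TorsionForms
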